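/- Every torsion-free module M over an integral domain admits a G*(ℵ₀)-family of relatively divisible submodules. Specifically, fixing a maximal independent set X of M, the collection of submodules M_Y (Y ⊆ X), where M_Y is the smallest relatively divisible submodule of M containing Y, is a G*(ℵ₀)-family. -/

import Mathlib

/-!
Since `M` is torsion-free, the RD-closure of `Y` is the saturation of `span Y`, the set of
elements having a nonzero multiple in `span Y`. Maximality of `X` says exactly that the
saturation of `span X` is all of `M`; as each multiple involves only finitely many elements of
`X`, a countable set lies in the saturation of `span Z` for some countable `Z ⊆ X`. Then the
closure of `Y ∪ Z` works for the closure of `Y`: modulo the latter it lies in the saturation of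
the span of the image of `Z`, and saturating does not change the rank. A directed union of
RD-submodules is RD, so the union of a chain of closures is the closure of its trace on `X`.
-/

open Cardinal

universe u v

variable {R : Type u} [CommRing R] [IsDomain R]
variable {M : Type v} [AddCommGroup M] [Module R M]

/-- `A` is a relatively divisible (RD) submodule of `M`. -/
def IsRD (A : Submodule R M) : Prop :=
  ∀ (r : R) (m : M), r • m ∈ A → ∃ a ∈ A, r • a = r • m

/-- `A` is relatively divisible within the submodule `N` of `M`. -/
def IsRDWithin (A N : Submodule R M) : Prop :=
  A ≤ N ∧ ∀ (r : R) (m : M), m ∈ N → r • m ∈ A → ∃ a ∈ A, r • a = r • m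

/-- `A` is an RD*-submodule of `M`: RD, and every finite rank submodule of `M ⧸ A`
has a countable rank preimage. -/
def IsRDStar (A : Submodule R M) : Prop :=
  IsRD A ∧ ∀ Q : Submodule R (M ⧸ A), Module.rank R ↥Q < ℵ₀ →
    ∃ C : Submodule R M, Module.rank R ↥C ≤ ℵ₀ ∧ C.map A.mkQ = Q

/-- `A` is an RD*-submodule of the submodule `N` of `M`. -/
def IsRDStarWithin (A N : Submodule R M) : Prop :=
  IsRDWithin A N ∧ ∀ Q : Submodule R (M ⧸ A), Q ≤ N.map A.mkQ →
    Module.rank R ↥Q < ℵ₀ →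
    ∃ C : Submodule R M, C ≤ N ∧ Module.rank R ↥C ≤ ℵ₀ ∧ C.map A.mkQ = Q

/-- `A` is a direct summand of `M`. -/
def IsSummand (A : Submodule R M) : Prop :=
  ∃ P : Submodule R M, A ⊓ P = ⊥ ∧ A ⊔ P = ⊤

/-- `A` is a direct summand of the submodule `N` of `M`. -/
def IsSummandWithin (A N : Submodule R M) : Prop :=
  A ≤ N ∧ ∃ P ≤ N, A ⊓ P = ⊥ ∧ A ⊔ P = N

/-- A G*(ℵ₀)-family of RD-submodules of `M`. -/
def IsGStarFamily (𝒢 : Set (Submodule R M)) : Prop :=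
  (∀ A ∈ 𝒢, IsRD A) ∧ (⊥ : Submodule R M) ∈ 𝒢 ∧ (⊤ : Submodule R M) ∈ 𝒢 ∧
  (∀ c ⊆ 𝒢, IsChain (· ≤ ·) c → c.Nonempty → sSup c ∈ 𝒢) ∧
  ∀ C ∈ 𝒢, ∀ X : Set M, X.Countable →
    ∃ B ∈ 𝒢, C ≤ B ∧ X ⊆ ↑B ∧ Module.rank R ↥(B.map C.mkQ) ≤ ℵ₀

/-- A G*(ℵ₀)-family of RD-submodules of the submodule `N` of `M`. -/
def IsGStarFamilyWithin (𝒢 : Set (Submodule R M)) (N : Submodule R M) : Prop :=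
  (∀ A ∈ 𝒢, IsRDWithin A N) ∧ (⊥ : Submodule R M) ∈ 𝒢 ∧ N ∈ 𝒢 ∧
  (∀ c ⊆ 𝒢, IsChain (· ≤ ·) c → c.Nonempty → sSup c ∈ 𝒢) ∧
  ∀ C ∈ 𝒢, ∀ X : Set M, X ⊆ ↑N → X.Countable →
    ∃ B ∈ 𝒢, C ≤ B ∧ X ⊆ ↑B ∧ Module.rank R ↥(B.map C.mkQ) ≤ ℵ₀

/-- `A` is ultra-balanced in `M`: an RD-submodule that is a direct summand of every
RD-submodule `C` of `M` containing `A` with `C/A` of finite rank. -/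
def IsUltraBalanced (A : Submodule R M) : Prop :=
  IsRD A ∧ ∀ C : Submodule R M, IsRD C → A ≤ C →
    Module.rank R ↥(C.map A.mkQ) < ℵ₀ →
    ∃ D ≤ C, A ⊓ D = ⊥ ∧ A ⊔ D = C

/-- `N` is a direct sum of submodules of countable rank. -/
def DSumCountableRank (R : Type u) [CommRing R] (N : Type v) [AddCommGroup N]
    [Module R N] : Prop :=
  ∃ (ι : Type v) (f : ι → Submodule R N), iSupIndep f ∧
    iSup f = ⊤ ∧ ∀ i, Module.rank R ↥(f i) ≤ ℵ₀

/-- `N` is finitely decomposable: a direct sum of finite rank submodules. -/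
def FinDecomp (R : Type u) [CommRing R] (N : Type v) [AddCommGroup N]
    [Module R N] : Prop :=
  ∃ (ι : Type v) (f : ι → Submodule R N), iSupIndep f ∧
    iSup f = ⊤ ∧ ∀ i, Module.rank R ↥(f i) < ℵ₀

/-- The smallest RD-submodule of `M` containing `Y`. -/
def rdClosure (Y : Set M) : Submodule R M :=
  sInf {N : Submodule R M | IsRD N ∧ Y ⊆ ↑N}

theorem isRD_sSup_of_directedOn {R M : Type*} [CommRing R] [AddCommGroup M] [Module R M]
    {c : Set (Submodule R M)} (hc : ∀ A ∈ c, IsRD A) (hne : c.Nonempty)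
    (hdir : DirectedOn (· ≤ ·) c) : IsRD (sSup c) := by
  intro r m hrm
  obtain ⟨A, hA, hrmA⟩ := (Submodule.mem_sSup_of_directed hne hdir).1 hrm
  obtain ⟨a, ha, hra⟩ := hc A hA r m hrmA
  exact ⟨a, le_sSup hA ha, hra⟩

namespace Submodule

def saturation (N : Submodule R M) : Submodule R M :=
  (torsion R (M ⧸ N)).comap N.mkQ

theorem mem_saturation {N : Submodule R M} {m : M} :
    m ∈ N.saturation ↔ ∃ r : R, r ≠ 0 ∧ r • m ∈ N := by
  simp only [saturation, mem_comap, mem_torsion_iff, mkQ_apply, ← Quotient.mk_smul,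
    Quotient.mk_eq_zero, Subtype.exists, mem_nonZeroDivisors_iff_ne_zero, Submonoid.mk_smul,
    exists_prop]

theorem le_saturation (N : Submodule R M) : N ≤ N.saturation :=
  fun m hm => mem_saturation.2 ⟨1, one_ne_zero, by rwa [one_smul]⟩

theorem saturation_mono {N N' : Submodule R M} (h : N ≤ N') : N.saturation ≤ N'.saturation :=
  fun _ hm => by
    obtain ⟨r, hr, hrm⟩ := mem_saturation.1 hm
    exact mem_saturation.2 ⟨r, hr, h hrm⟩

theorem saturation_saturation_le (N : Submodule R M) : N.saturation.saturation ≤ N.saturation :=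
  fun m hm => by
    obtain ⟨r, hr, hrm⟩ := mem_saturation.1 hm
    obtain ⟨s, hs, hsrm⟩ := mem_saturation.1 hrm
    exact mem_saturation.2 ⟨s * r, mul_ne_zero hs hr, by rwa [mul_smul]⟩

theorem saturation_bot [NoZeroSMulDivisors R M] : (⊥ : Submodule R M).saturation = ⊥ :=
  eq_bot_iff.2 fun m hm => by
    obtain ⟨r, hr, hrm⟩ := mem_saturation.1 hm
    exact (mem_bot R).2 ((smul_eq_zero.1 hrm).resolve_left hr)

theorem map_saturation_le {M' : Type*} [AddCommGroup M'] [Module R M'] (N : Submodule R M)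
    (f : M →ₗ[R] M') : N.saturation.map f ≤ (N.map f).saturation := by
  rintro _ ⟨m, hm, rfl⟩
  obtain ⟨r, hr, hrm⟩ := mem_saturation.1 hm
  exact mem_saturation.2 ⟨r, hr, by rw [← map_smul]; exact mem_map_of_mem hrm⟩

theorem rank_saturation (N : Submodule R M) :
    Module.rank R N.saturation = Module.rank R N := by
  refine le_antisymm ?_ (rank_mono N.le_saturation)
  by_contra! h
  rw [← (comapSubtypeEquivOfLe N.le_saturation).rank_eq] at h
  obtain ⟨⟨m, hm⟩, hnot⟩ := exists_smul_notMem_of_rank_lt h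
  obtain ⟨r, hr, hrm⟩ := mem_saturation.1 hm
  exact hnot r hr hrm

end Submodule

open Submodule

theorem exists_countable_subset_saturation_span {X S : Set M} (hS : S.Countable)
    (h : S ⊆ (span R X).saturation) :
    ∃ Z ⊆ X, Z.Countable ∧ S ⊆ (span R Z).saturation := by
  choose r hr hrs using fun s : S => mem_saturation.1 (h s.2)
  choose F hFX hF using fun s : S => mem_span_finite_of_mem_span (hrs s)
  have : Countable S := hS.to_subtype
  refine ⟨⋃ s, F s, Set.iUnion_subset hFX, Set.countable_iUnion fun s => (F s).countable_toSet,
    fun s hs => mem_saturation.2 ⟨r ⟨s, hs⟩, hr _, ?_⟩⟩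
  exact span_mono (Set.subset_iUnion (fun s => (F s : Set M)) ⟨s, hs⟩) (hF _)

theorem saturation_span_eq_top_of_maximal {X : Set M}
    (hX : LinearIndependent R (Subtype.val : X → M))
    (hmax : ∀ Y : Set M, X ⊆ Y → LinearIndependent R (Subtype.val : Y → M) → Y = X) :
    (span R X).saturation = ⊤ := by
  refine eq_top_iff.2 fun m _ => mem_saturation.2 ?_
  by_contra! h
  have hins : insert m X = X :=
    hmax _ (Set.subset_insert m X) (LinearIndepOn.id_insert' hX fun r hr => by
      by_contra hr0; exact h r hr0 hr)
  exact h 1 one_ne_zero (by rw [one_smul]; exact subset_span (hins ▸ Set.mem_insert m X))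

theorem isRD_of_saturation_le {A : Submodule R M} (h : A.saturation ≤ A) : IsRD A := by
  intro r m hrm
  rcases eq_or_ne r 0 with rfl | hr
  · exact ⟨0, A.zero_mem, by rw [zero_smul, zero_smul]⟩
  · exact ⟨m, h (mem_saturation.2 ⟨r, hr, hrm⟩), rfl⟩

theorem IsRD.saturation_le [NoZeroSMulDivisors R M] {A : Submodule R M} (hA : IsRD A) :
    A.saturation ≤ A := fun m hm => by
  obtain ⟨r, hr, hrm⟩ := mem_saturation.1 hm
  obtain ⟨a, ha, hra⟩ := hA r m hrm
  rwa [← smul_right_injective M hr hra]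

theorem rank_map_mkQ_saturation_span_union_le {C : Submodule R M} {Y Z : Set M} (hY : Y ⊆ C) :
    Module.rank R ((span R (Y ∪ Z)).saturation.map C.mkQ) ≤ #Z := by
  have hspan : (span R (Y ∪ Z)).map C.mkQ ≤ span R (C.mkQ '' Z) := by
    rw [map_le_iff_le_comap, span_le]
    rintro x (hx | hx)
    · rw [SetLike.mem_coe, mem_comap, mkQ_apply, (Quotient.mk_eq_zero C).2 (hY hx)]
      exact zero_mem _
    · exact subset_span (Set.mem_image_of_mem _ hx)
  calc Module.rank R ((span R (Y ∪ Z)).saturation.map C.mkQ)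
      ≤ Module.rank R (span R (C.mkQ '' Z)).saturation :=
        rank_mono ((map_saturation_le _ _).trans (saturation_mono hspan))
    _ = Module.rank R (span R (C.mkQ '' Z)) := rank_saturation _
    _ ≤ #(C.mkQ '' Z) := rank_span_le _
    _ ≤ #Z := mk_image_le

section TorsionFree

variable [NoZeroSMulDivisors R M]

theorem rdClosure_eq_saturation_span (Y : Set M) :
    rdClosure (R := R) Y = (span R Y).saturation :=
  le_antisymm
    (sInf_le ⟨isRD_of_saturation_le (saturation_saturation_le _),
      subset_span.trans (le_saturation _)⟩)
    (le_sInf fun _ ⟨hA, hY⟩ => (saturation_mono (span_le.2 hY)).trans hA.saturation_le)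

theorem isRD_rdClosure (Y : Set M) : IsRD (rdClosure (R := R) Y) := by
  rw [rdClosure_eq_saturation_span]
  exact isRD_of_saturation_le (saturation_saturation_le _)

theorem subset_rdClosure (Y : Set M) : Y ⊆ rdClosure (R := R) Y := by
  rw [rdClosure_eq_saturation_span]
  exact subset_span.trans (le_saturation _)

theorem rdClosure_mono {Y Y' : Set M} (h : Y ⊆ Y') : rdClosure (R := R) Y ≤ rdClosure Y' := by
  simp only [rdClosure_eq_saturation_span]
  exact saturation_mono (span_mono h)

theorem sSup_eq_rdClosure_inter {X : Set M} {c : Set (Submodule R M)}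
    (hc : ∀ N ∈ c, ∃ Y ⊆ X, N = rdClosure Y) (hne : c.Nonempty)
    (hdir : DirectedOn (· ≤ ·) c) :
    sSup c = rdClosure (X ∩ (sSup c : Submodule R M)) := by
  refine le_antisymm (sSup_le fun N hN => ?_) (sInf_le ⟨?_, Set.inter_subset_right⟩)
  · obtain ⟨Y, hYX, rfl⟩ := hc N hN
    exact rdClosure_mono fun y hy => ⟨hYX hy, le_sSup hN (subset_rdClosure Y hy)⟩
  · refine isRD_sSup_of_directedOn (fun N hN => ?_) hne hdir
    obtain ⟨Y, -, rfl⟩ := hc N hN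
    exact isRD_rdClosure Y

end TorsionFree

/-- The RD-closures of the subsets of a maximal independent set `X` form a
G*(ℵ₀)-family of RD-submodules of `M`. -/
theorem gStarFamily_rdClosures [NoZeroSMulDivisors R M] (X : Set M)
    (hX : LinearIndependent R (Subtype.val : X → M))
    (hmax : ∀ Y : Set M, X ⊆ Y → LinearIndependent R (Subtype.val : Y → M) → Y = X) :
    IsGStarFamily {N : Submodule R M | ∃ Y ⊆ X, N = rdClosure Y} := by
  have hsat : (span R X).saturation = ⊤ := saturation_span_eq_top_of_maximal hX hmax
  refine ⟨?_, ⟨∅, Set.empty_subset X, ?_⟩, ⟨X, subset_rfl, ?_⟩, ?_, ?_⟩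
  · rintro _ ⟨Y, -, rfl⟩
    exact isRD_rdClosure Y
  · rw [rdClosure_eq_saturation_span, span_empty, saturation_bot]
  · rw [rdClosure_eq_saturation_span, hsat]
  · intro c hc hchain hne
    exact ⟨_, Set.inter_subset_left, sSup_eq_rdClosure_inter hc hne hchain.directedOn⟩
  · rintro _ ⟨Y, hYX, rfl⟩ S hS
    obtain ⟨Z, hZX, hZ, hSZ⟩ :=
      exists_countable_subset_saturation_span hS (by rw [hsat]; exact fun _ _ => mem_top)
    refine ⟨rdClosure (Y ∪ Z), ⟨Y ∪ Z, Set.union_subset hYX hZX, rfl⟩,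
      rdClosure_mono Set.subset_union_left, ?_, ?_⟩
    · rw [rdClosure_eq_saturation_span]
      exact hSZ.trans (saturation_mono (span_mono Set.subset_union_right))
    · rw [rdClosure_eq_saturation_span (Y ∪ Z)]
      exact (rank_map_mkQ_saturation_span_union_le (subset_rdClosure Y)).trans
        (mk_le_aleph0_iff.2 hZ.to_subtype)
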